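/- arXiv:1810.12688 — 3 statements merged into one kernel-verified Lean document; each statement's English description precedes it below -/
import Mathlib

section
/- Let A : ℝⁿ \ {0} → ℝⁿ be a C¹ vector field such that for all ξ ≠ 0 and all v ∈ ℝⁿ one has ⟨DA(ξ) v, v⟩ ≥ C |ξ|^{p-2} |v|² with p > 1 and C > 0. Then for all x, y ∈ ℝⁿ with x ≠ 0, y ≠ 0 and such that the segment [x,y] avoids the origin, ⟨A(x) - A(y), x - y⟩ ≥ C' (|x| + |y|)^{p-2} |x - y|² for a constant C' > 0 depending only on C and p. -/
/-!
Along the segment `γ t = y + t • (x - y)`, the function `t ↦ ⟪A (γ t), x - y⟫` has derivative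
`⟪DA(γ t)(x - y), x - y⟫ ≥ C ‖γ t‖^(p-2) ‖x - y‖²`, which is nonnegative on `[0, 1]`. If
`‖y‖ ≤ ‖x‖`, then on `[3/4, 1]` the point `γ t` stays within a fixed factor of `‖x‖ + ‖y‖` in
norm (between a quarter of it and all of it), so there `‖γ t‖^(p-2)` is bounded below by a multiple
of `(‖x‖ + ‖y‖)^(p-2)` whatever the sign of `p - 2`. Integrating the derivative bound over
`[3/4, 1]` gives the claim.
-/

open Set
open scoped RealInnerProductSpace

lemma mul_sub_le_sub_of_hasDerivAt {f f' : ℝ → ℝ} {a b c m : ℝ} (hab : a ≤ b) (hbc : b ≤ c)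
    (hf : ∀ t ∈ Icc a c, HasDerivAt f (f' t) t) (hf'_nonneg : ∀ t ∈ Icc a b, 0 ≤ f' t)
    (hf'_ge : ∀ t ∈ Icc b c, m ≤ f' t) : m * (c - b) ≤ f c - f a := by
  have mean_value : ∀ d e k, a ≤ d → e ≤ c → d ≤ e → (∀ t ∈ Icc d e, k ≤ f' t) →
      k * (e - d) ≤ f e - f d := by
    intro d e k had hec hde hk
    have hsub : Icc d e ⊆ Icc a c := Icc_subset_Icc had hec
    refine (convex_Icc d e).mul_sub_le_image_sub_of_le_deriv
      (fun t ht => (hf t (hsub ht)).continuousAt.continuousWithinAt)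
      (fun t ht => (hf t (hsub (interior_subset ht))).differentiableAt.differentiableWithinAt)
      (fun t ht => ?_) d (left_mem_Icc.2 hde) e (right_mem_Icc.2 hde) hde
    rw [(hf t (hsub (interior_subset ht))).deriv]
    exact hk t (interior_subset ht)
  have hab' := mean_value a b 0 le_rfl hbc hab hf'_nonneg
  have hbc' := mean_value b c m hab le_rfl hbc hf'_ge
  linarith

lemma min_rpow_neg_mul_rpow_le_rpow {k r s q : ℝ} (hk : 0 < k) (hr : 0 < r)
    (hsr : s / k ≤ r) (hrs : r ≤ s) : min (k ^ (-q)) 1 * s ^ q ≤ r ^ q := by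
  have hs : 0 < s := hr.trans_le hrs
  rcases le_total 0 q with hq | hq
  · calc min (k ^ (-q)) 1 * s ^ q ≤ k ^ (-q) * s ^ q := by gcongr; exact min_le_left _ _
      _ = (s / k) ^ q := by
        rw [Real.div_rpow hs.le hk.le, Real.rpow_neg hk.le, div_eq_inv_mul]
      _ ≤ r ^ q := Real.rpow_le_rpow (by positivity) hsr hq
  · calc min (k ^ (-q)) 1 * s ^ q ≤ 1 * s ^ q := by gcongr; exact min_le_right _ _
      _ = s ^ q := one_mul _
      _ ≤ r ^ q := Real.rpow_le_rpow_of_nonpos hr hrs hq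

section InnerProductSpace

variable {E : Type*} [NormedAddCommGroup E] [InnerProductSpace ℝ E]

lemma norm_add_smul_sub_le {x y : E} {t : ℝ} (ht : t ∈ Icc (0 : ℝ) 1) (hyx : ‖y‖ ≤ ‖x‖) :
    ‖y + t • (x - y)‖ ≤ ‖x‖ := by
  have hmem := (convex_closedBall (0 : E) ‖x‖).add_smul_sub_mem
    (mem_closedBall_zero_iff.2 hyx) (mem_closedBall_zero_iff.2 le_rfl) ht
  exact mem_closedBall_zero_iff.1 hmem

lemma div_four_le_norm_add_smul_sub {x y : E} {t : ℝ} (ht : t ∈ Icc (3 / 4 : ℝ) 1)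
    (hyx : ‖y‖ ≤ ‖x‖) : (‖x‖ + ‖y‖) / 4 ≤ ‖y + t • (x - y)‖ := by
  have hγ : y + t • (x - y) = x - (1 - t) • (x - y) := by module
  have hdist : ‖(1 - t) • (x - y)‖ ≤ (1 - t) * (‖x‖ + ‖y‖) := by
    rw [norm_smul, Real.norm_of_nonneg (by linarith [ht.2])]
    exact mul_le_mul_of_nonneg_left (norm_sub_le x y) (by linarith [ht.2])
  have hrev := norm_sub_norm_le x ((1 - t) • (x - y))
  rw [hγ]
  nlinarith [ht.1, norm_nonneg y]

lemma hasDerivAt_inner_apply_add_smul {A : E → E} {y v : E} {t : ℝ}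
    (hA : DifferentiableAt ℝ A (y + t • v)) :
    HasDerivAt (fun s : ℝ => ⟪A (y + s • v), v⟫) ⟪fderiv ℝ A (y + t • v) v, v⟫ t := by
  have hline : HasDerivAt (fun s : ℝ => y + s • v) v t := by
    simpa using ((hasDerivAt_id t).smul_const v).const_add y
  simpa using (hA.hasFDerivAt.comp_hasDerivAt t hline).inner ℝ (hasDerivAt_const t v)

variable {A : E → E} {p C : ℝ}

theorem le_inner_sub_of_norm_le (hC : 0 ≤ C) (hAdiff : ∀ ξ : E, ξ ≠ 0 → DifferentiableAt ℝ A ξ)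
    (hell : ∀ ξ : E, ξ ≠ 0 → ∀ v : E, C * ‖ξ‖ ^ (p - 2) * ‖v‖ ^ 2 ≤ ⟪fderiv ℝ A ξ v, v⟫)
    {x y : E} (hseg : (0 : E) ∉ segment ℝ x y) (hyx : ‖y‖ ≤ ‖x‖) :
    C * min (4 ^ (-(p - 2))) 1 / 4 * (‖x‖ + ‖y‖) ^ (p - 2) * ‖x - y‖ ^ 2 ≤ ⟪A x - A y, x - y⟫ := by
  set v := x - y
  have hne : ∀ t ∈ Icc (0 : ℝ) 1, y + t • v ≠ 0 := by
    intro t ht h0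
    rw [segment_symm, segment_eq_image'] at hseg
    exact hseg ⟨t, ht, h0⟩
  have hsub : Icc (3 / 4 : ℝ) 1 ⊆ Icc 0 1 := Icc_subset_Icc (by norm_num) le_rfl
  have hsub' : Icc (0 : ℝ) (3 / 4) ⊆ Icc 0 1 := Icc_subset_Icc le_rfl (by norm_num)
  have key := mul_sub_le_sub_of_hasDerivAt (f := fun t : ℝ => ⟪A (y + t • v), v⟫)
    (a := 0) (b := 3 / 4) (c := 1)
    (m := C * (min (4 ^ (-(p - 2))) 1 * (‖x‖ + ‖y‖) ^ (p - 2)) * ‖v‖ ^ 2) (by norm_num)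
    (by norm_num) (fun t ht => hasDerivAt_inner_apply_add_smul (hAdiff _ (hne t ht)))
    (fun t ht => le_trans (by positivity) (hell _ (hne t (hsub' ht)) v)) (fun t ht => ?_)
  · simp only [zero_smul, add_zero, one_smul, v, add_sub_cancel] at key
    rw [inner_sub_left]
    linarith
  · refine le_trans ?_ (hell _ (hne t (hsub ht)) v)
    gcongr
    exact min_rpow_neg_mul_rpow_le_rpow (by norm_num) (norm_pos_iff.2 (hne t (hsub ht)))
      (div_four_le_norm_add_smul_sub ht hyx)
      ((norm_add_smul_sub_le (hsub ht) hyx).trans (le_add_of_nonneg_right (norm_nonneg y)))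

theorem le_inner_sub (hC : 0 ≤ C) (hAdiff : ∀ ξ : E, ξ ≠ 0 → DifferentiableAt ℝ A ξ)
    (hell : ∀ ξ : E, ξ ≠ 0 → ∀ v : E, C * ‖ξ‖ ^ (p - 2) * ‖v‖ ^ 2 ≤ ⟪fderiv ℝ A ξ v, v⟫)
    {x y : E} (hseg : (0 : E) ∉ segment ℝ x y) :
    C * min (4 ^ (-(p - 2))) 1 / 4 * (‖x‖ + ‖y‖) ^ (p - 2) * ‖x - y‖ ^ 2 ≤ ⟪A x - A y, x - y⟫ := by
  rcases le_total ‖y‖ ‖x‖ with hyx | hxy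
  · exact le_inner_sub_of_norm_le hC hAdiff hell hseg hyx
  · have h := le_inner_sub_of_norm_le hC hAdiff hell (segment_symm ℝ x y ▸ hseg) hxy
    rwa [add_comm, norm_sub_rev, ← neg_sub x y, ← neg_sub (A x) (A y), inner_neg_neg] at h

end InnerProductSpace

theorem monotonicity_from_ellipticity_general {n : ℕ} (p C : ℝ)
    (hC : 0 < C)
    (A : EuclideanSpace ℝ (Fin n) → EuclideanSpace ℝ (Fin n))
    (hAdiff : ∀ ξ : EuclideanSpace ℝ (Fin n), ξ ≠ 0 → DifferentiableAt ℝ A ξ)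
    (hell : ∀ ξ : EuclideanSpace ℝ (Fin n), ξ ≠ 0 →
      ∀ v : EuclideanSpace ℝ (Fin n),
        C * ‖ξ‖ ^ (p - 2) * ‖v‖ ^ 2 ≤ (inner ℝ (fderiv ℝ A ξ v) v : ℝ)) :
    ∃ C' : ℝ, 0 < C' ∧ ∀ x y : EuclideanSpace ℝ (Fin n),
      x ≠ 0 → y ≠ 0 → (0 : EuclideanSpace ℝ (Fin n)) ∉ segment ℝ x y →
      C' * (‖x‖ + ‖y‖) ^ (p - 2) * ‖x - y‖ ^ 2 ≤
        (inner ℝ (A x - A y) (x - y) : ℝ) :=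
  ⟨C * min (4 ^ (-(p - 2))) 1 / 4, by positivity,
    fun _ _ _ _ hseg => le_inner_sub hC.le hAdiff hell hseg⟩

/-- Monotonicity of a vector field from pointwise ellipticity: if
`⟨DA(ξ)v, v⟩ ≥ C |ξ|^{p-2} |v|²` away from the origin, then
`⟨A(x) - A(y), x - y⟩ ≥ C' (|x| + |y|)^{p-2} |x - y|²` whenever the segment
`[x,y]` avoids the origin, with `C'` depending only on `C` and `p`. -/
theorem monotonicity_from_ellipticity {n : ℕ} (p C : ℝ)
    (hp : 1 < p) (hC : 0 < C)
    (A : EuclideanSpace ℝ (Fin n) → EuclideanSpace ℝ (Fin n))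
    (hA : ContDiffOn ℝ 1 A {(0 : EuclideanSpace ℝ (Fin n))}ᶜ)
    (hAdiff : ∀ ξ : EuclideanSpace ℝ (Fin n), ξ ≠ 0 → DifferentiableAt ℝ A ξ)
    (hell : ∀ ξ : EuclideanSpace ℝ (Fin n), ξ ≠ 0 →
      ∀ v : EuclideanSpace ℝ (Fin n),
        C * ‖ξ‖ ^ (p - 2) * ‖v‖ ^ 2 ≤ (inner ℝ (fderiv ℝ A ξ v) v : ℝ)) :
    ∃ C' : ℝ, 0 < C' ∧ ∀ x y : EuclideanSpace ℝ (Fin n),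
      x ≠ 0 → y ≠ 0 → (0 : EuclideanSpace ℝ (Fin n)) ∉ segment ℝ x y →
      C' * (‖x‖ + ‖y‖) ^ (p - 2) * ‖x - y‖ ^ 2 ≤
        (inner ℝ (A x - A y) (x - y) : ℝ) :=
  monotonicity_from_ellipticity_general p C hC A hAdiff hell
end

section
/- Sobolev regularity via Hölder interpolation, case p ≥ 3: let Ω ⊂ ℝⁿ be bounded, k ∈ [0,1], p ≥ 3, and u measurable with weak second derivatives such that (a) ∫_Ω (k+|∇u|)^{p-2-β} |D²u|² dx ≤ C₁ for every β ∈ [0,1), and (b) ∫_Ω (k+|∇u|)^{-t} dx ≤ C₂ for every t ∈ [0, p-1). Then for every q < (p-1)/(p-2), D²u ∈ L^q(Ω), with the bound ∫_Ω |D²u|^q ≤ C₁^{q/2} C₂^{(2-q)/2} obtained by Hölder's inequality with exponents 2/q and 2/(2-q) applied to |D²u|^q (k+|∇u|)^{(p-2-β)q/2} · (k+|∇u|)^{-(p-2-β)q/2}, choosing β < 1 with (p-2-β) q/(2-q) < p-1. -/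
/-!
Hölder's inequality with exponents `2/q` and `2/(2-q)` splits
`|D²u|^q = (w^s |D²u|²)^(q/2) · (w^(-s q/(2-q)))^((2-q)/2)`, where `w = k + |∇u|` and
`s = p - 2 - β`. The first factor is controlled by the weighted Hessian estimate and the
second by the inverse-weight estimate, once `β ∈ [0,1)` is chosen so that
`s q/(2-q) < p - 1`; this is possible exactly because `q < (p-1)/(p-2)`.
The inverse-weight estimate also forces `w > 0` almost everywhere, which makes the
splitting valid.
-/

open MeasureTheory
open scoped ENNReal

theorem measurable_gradient {F : Type*} [NormedAddCommGroup F] [InnerProductSpace ℝ F]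
    [CompleteSpace F] [MeasurableSpace F] [BorelSpace F] (f : F → ℝ) :
    Measurable (gradient f) :=
  (InnerProductSpace.toDual ℝ F).symm.continuous.measurable.comp (measurable_fderiv ℝ f)

theorem ae_pos_of_lintegral_ofReal_rpow_neg_ne_top {α : Type*} [MeasurableSpace α]
    {μ : Measure α} {w : α → ℝ} (hw : AEMeasurable w μ) {t : ℝ} (ht : 0 < t)
    (h : ∫⁻ x, ENNReal.ofReal (w x) ^ (-t) ∂μ ≠ ∞) : ∀ᵐ x ∂μ, 0 < w x := by
  filter_upwards [ae_lt_top' (hw.ennreal_ofReal.pow_const _) h] with x hx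
  by_contra! hwx
  rw [ENNReal.ofReal_of_nonpos hwx, ENNReal.zero_rpow_of_neg (neg_neg_of_pos ht)] at hx
  exact hx.false

theorem ofReal_rpow_eq_holder_factors {a w : ℝ} (ha : 0 ≤ a) (hw : 0 < w) (s : ℝ) {q : ℝ}
    (hq0 : 0 ≤ q) (hq : q ≠ 2) :
    ENNReal.ofReal (a ^ q) = ENNReal.ofReal (w ^ s * a ^ 2) ^ (q / 2) *
      (ENNReal.ofReal w ^ (-(s * q / (2 - q)))) ^ ((2 - q) / 2) := by
  have h2q : 2 - q ≠ 0 := sub_ne_zero.mpr (Ne.symm hq)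
  rw [← ENNReal.rpow_mul, ENNReal.ofReal_rpow_of_pos hw,
    ENNReal.ofReal_rpow_of_nonneg (by positivity) (by positivity),
    ← ENNReal.ofReal_mul (by positivity), Real.mul_rpow (by positivity) (by positivity),
    ← Real.rpow_mul hw.le, ← Real.rpow_natCast, ← Real.rpow_mul ha, mul_right_comm,
    ← Real.rpow_add hw]
  congr 1
  field_simp
  simp

theorem lintegral_ofReal_rpow_le_weighted_holder {α : Type*} [MeasurableSpace α]
    {μ : Measure α} {f w : α → ℝ} (hf : AEMeasurable f μ) (hf0 : ∀ᵐ x ∂μ, 0 ≤ f x)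
    (hw : AEMeasurable w μ) (hw0 : ∀ᵐ x ∂μ, 0 < w x) (s : ℝ) {q : ℝ} (hq0 : 0 < q)
    (hq2 : q < 2) :
    ∫⁻ x, ENNReal.ofReal (f x ^ q) ∂μ ≤
      (∫⁻ x, ENNReal.ofReal (w x ^ s * f x ^ 2) ∂μ) ^ (q / 2) *
        (∫⁻ x, ENNReal.ofReal (w x) ^ (-(s * q / (2 - q))) ∂μ) ^ ((2 - q) / 2) := by
  have hconj : (2 / q).HolderConjugate (2 / (2 - q)) := by
    rw [Real.holderConjugate_iff, one_lt_div hq0]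
    exact ⟨hq2, by field_simp; ring⟩
  set A := fun x ↦ ENNReal.ofReal (w x ^ s * f x ^ 2)
  set B := fun x ↦ ENNReal.ofReal (w x) ^ (-(s * q / (2 - q)))
  have hA : AEMeasurable A μ :=
    ((hw.pow_const s).mul (hf.pow_const 2)).ennreal_ofReal
  have hB : AEMeasurable B μ := hw.ennreal_ofReal.pow_const _
  calc ∫⁻ x, ENNReal.ofReal (f x ^ q) ∂μ
      = ∫⁻ x, ((fun y ↦ A y ^ (q / 2)) * fun y ↦ B y ^ ((2 - q) / 2)) x ∂μ := by
        refine lintegral_congr_ae ?_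
        filter_upwards [hf0, hw0] with x hfx hwx
        exact ofReal_rpow_eq_holder_factors hfx hwx s hq0.le hq2.ne
    _ ≤ (∫⁻ x, (A x ^ (q / 2)) ^ (2 / q) ∂μ) ^ (1 / (2 / q)) *
          (∫⁻ x, (B x ^ ((2 - q) / 2)) ^ (2 / (2 - q)) ∂μ) ^ (1 / (2 / (2 - q))) :=
        ENNReal.lintegral_mul_le_Lp_mul_Lq μ hconj (hA.pow_const _) (hB.pow_const _)
    _ = (∫⁻ x, A x ∂μ) ^ (q / 2) * (∫⁻ x, B x ∂μ) ^ ((2 - q) / 2) := by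
        have h2q : 2 - q ≠ 0 := sub_ne_zero.mpr hq2.ne'
        simp only [← ENNReal.rpow_mul, one_div_div]
        field_simp
        simp only [ENNReal.rpow_one]

theorem lt_two_of_lt_sub_one_div_sub_two {p q : ℝ} (hp : 3 ≤ p)
    (hq : q < (p - 1) / (p - 2)) : q < 2 := by
  have hqp : q * (p - 2) < p - 1 := (lt_div_iff₀ (by linarith)).mp hq
  nlinarith

theorem exists_weighted_holder_exponent {p q : ℝ} (hp : 3 ≤ p) (hq1 : 1 < q)
    (hq : q < (p - 1) / (p - 2)) :
    ∃ β ∈ Set.Ico (0 : ℝ) 1, (p - 2 - β) * q / (2 - q) ∈ Set.Ioo 0 (p - 1) := by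
  have hqp : q * (p - 2) < p - 1 := (lt_div_iff₀ (by linarith)).mp hq
  have h2q : 0 < 2 - q := by linarith [lt_two_of_lt_sub_one_div_sub_two hp hq]
  -- `(p - 2 - β) * q / (2 - q) < p - 1` iff `β` exceeds the first argument of `max`.
  obtain ⟨β, hβ0, hβ1⟩ := exists_between
    (max_lt (show ((p - 2) * q - (p - 1) * (2 - q)) / q < 1 by
      rw [div_lt_one (by linarith)]; nlinarith) zero_lt_one)
  rw [max_lt_iff, div_lt_iff₀ (by linarith)] at hβ0
  refine ⟨β, ⟨hβ0.2.le, hβ1⟩, div_pos (mul_pos (by linarith) (by linarith)) h2q, ?_⟩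
  rw [div_lt_iff₀ h2q]
  nlinarith

theorem sobolev_regularity_p_ge_three_general {n : ℕ} (p k C₁ C₂ : ℝ)
    (hp : 3 ≤ p) (hC₁ : 0 ≤ C₁) (hC₂ : 0 ≤ C₂)
    (Ω : Set (EuclideanSpace ℝ (Fin n)))
    (hΩopen : IsOpen Ω)
    (u : EuclideanSpace ℝ (Fin n) → ℝ)
    (D2u : EuclideanSpace ℝ (Fin n) →
      EuclideanSpace ℝ (Fin n) →L[ℝ] EuclideanSpace ℝ (Fin n))
    (hD2u : ∀ x ∈ Ω, D2u x = fderiv ℝ (gradient u) x)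
    (hhess : ∀ β : ℝ, β ∈ Set.Ico (0:ℝ) 1 →
      (∫⁻ x in Ω, ENNReal.ofReal
        ((k + ‖gradient u x‖) ^ (p - 2 - β) * ‖D2u x‖ ^ 2)) ≤
        ENNReal.ofReal C₁)
    (hweight : ∀ t : ℝ, t ∈ Set.Ico (0:ℝ) (p - 1) →
      (∫⁻ x in Ω,
        (ENNReal.ofReal (k + ‖gradient u x‖)) ^ (-t : ℝ)) ≤
        ENNReal.ofReal C₂) :
    ∀ q : ℝ, 1 < q → q < (p - 1) / (p - 2) →
      (∫⁻ x in Ω, ENNReal.ofReal (‖D2u x‖ ^ q)) ≤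
        ENNReal.ofReal (C₁ ^ (q / 2) * C₂ ^ ((2 - q) / 2)) := by
  intro q hq1 hq
  have hq2 := lt_two_of_lt_sub_one_div_sub_two hp hq
  obtain ⟨β, hβ, ht⟩ := exists_weighted_holder_exponent hp hq1 hq
  have hweight_β := hweight _ (Set.Ioo_subset_Ico_self ht)
  have hw : Measurable fun x ↦ k + ‖gradient u x‖ :=
    measurable_const.add (measurable_gradient u).norm
  have hD2 : AEMeasurable (fun x ↦ ‖D2u x‖) (volume.restrict Ω) := by
    refine ⟨fun x ↦ ‖fderiv ℝ (gradient u) x‖, (measurable_fderiv ℝ _).norm, ?_⟩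
    filter_upwards [ae_restrict_mem hΩopen.measurableSet] with x hx
    rw [hD2u x hx]
  have hw0 := ae_pos_of_lintegral_ofReal_rpow_neg_ne_top hw.aemeasurable
    ht.1 (hweight_β.trans_lt ENNReal.ofReal_lt_top).ne
  calc (∫⁻ x in Ω, ENNReal.ofReal (‖D2u x‖ ^ q))
      ≤ _ := lintegral_ofReal_rpow_le_weighted_holder hD2
          (.of_forall fun _ ↦ norm_nonneg _) hw.aemeasurable hw0 (p - 2 - β) (by linarith) hq2
    _ ≤ ENNReal.ofReal C₁ ^ (q / 2) * ENNReal.ofReal C₂ ^ ((2 - q) / 2) :=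
        mul_le_mul' (ENNReal.rpow_le_rpow (hhess β hβ) (by linarith))
          (ENNReal.rpow_le_rpow hweight_β (by linarith))
    _ = ENNReal.ofReal (C₁ ^ (q / 2) * C₂ ^ ((2 - q) / 2)) := by
        rw [ENNReal.ofReal_rpow_of_nonneg hC₁ (by linarith),
          ENNReal.ofReal_rpow_of_nonneg hC₂ (by linarith), ← ENNReal.ofReal_mul (by positivity)]

/-- Sobolev regularity via Hölder interpolation for `p ≥ 3`: if the weighted
Hessian estimate holds with constant `C₁` for every `β ∈ [0,1)` and the
inverse-weight estimate holds with constant `C₂` for every `t ∈ [0, p-1)`,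
then for every `q` with `1 < q < (p-1)/(p-2)` the Hessian is in `L^q(Ω)`,
with the bound `∫_Ω |D²u|^q ≤ C₁^{q/2} C₂^{(2-q)/2}`. -/
theorem sobolev_regularity_p_ge_three {n : ℕ} (p k C₁ C₂ : ℝ)
    (hp : 3 ≤ p) (hk : k ∈ Set.Icc (0:ℝ) 1) (hC₁ : 0 ≤ C₁) (hC₂ : 0 ≤ C₂)
    (Ω : Set (EuclideanSpace ℝ (Fin n)))
    (hΩopen : IsOpen Ω) (hΩbdd : Bornology.IsBounded Ω)
    (u : EuclideanSpace ℝ (Fin n) → ℝ)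
    (D2u : EuclideanSpace ℝ (Fin n) →
      EuclideanSpace ℝ (Fin n) →L[ℝ] EuclideanSpace ℝ (Fin n))
    (hD2u : ∀ x ∈ Ω, D2u x = fderiv ℝ (gradient u) x)
    (hhess : ∀ β : ℝ, β ∈ Set.Ico (0:ℝ) 1 →
      (∫⁻ x in Ω, ENNReal.ofReal
        ((k + ‖gradient u x‖) ^ (p - 2 - β) * ‖D2u x‖ ^ 2)) ≤
        ENNReal.ofReal C₁)
    (hweight : ∀ t : ℝ, t ∈ Set.Ico (0:ℝ) (p - 1) →
      (∫⁻ x in Ω,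
        (ENNReal.ofReal (k + ‖gradient u x‖)) ^ (-t : ℝ)) ≤
        ENNReal.ofReal C₂) :
    ∀ q : ℝ, 1 < q → q < (p - 1) / (p - 2) →
      (∫⁻ x in Ω, ENNReal.ofReal (‖D2u x‖ ^ q)) ≤
        ENNReal.ofReal (C₁ ^ (q / 2) * C₂ ^ ((2 - q) / 2)) :=
  sobolev_regularity_p_ge_three_general p k C₁ C₂ hp hC₁ hC₂ Ω hΩopen u D2u hD2u hhess hweight
end

section
/- Structural ellipticity bound: under assumptions (i)–(vi), there exist constants C̄₁, C̄₂ > 0 such that for every ξ ∈ ℝⁿ \ {0} and every v ∈ ℝⁿ, ⟨[B''(H(ξ)) ∇H(ξ) ⊗ ∇H(ξ) + B'(H(ξ)) D²H(ξ)] v, v⟩ ≥ C̄₁ (k+|ξ|)^{p-2} |v|², and the matrix norm satisfies |B''(H(ξ)) ∇H(ξ) ⊗ ∇H(ξ) + B'(H(ξ)) D²H(ξ)| ≤ C̄₂ (k+|ξ|)^{p-2}. -/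
/-!
Everything reduces to the unit sphere by homogeneity: `H`, `∇H` and `D²H` are positively
homogeneous of degrees `1`, `0`, `-1`, so by compactness `H(ξ) ≍ |ξ|`, `|∇H(ξ)|` is bounded and
`|D²H(ξ)| H(ξ)` is bounded; in particular `(k + H(ξ))^{p-2} ≍ (k + |ξ|)^{p-2}`. Euler's identities
`⟨∇H(ξ), ξ⟩ = H(ξ)` and `D²H(ξ) ξ = 0` split `v` into its `ξ`-component, seen by the `B''` term,
and a component orthogonal to `∇H(ξ)`, on which the ellipticity of `H` (rescaled from the unit
level set) makes the `B'` term coercive.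
-/

open InnerProductSpace Filter Topology

section Calculus

variable {𝕜 E F : Type*} [NontriviallyNormedField 𝕜] [NormedAddCommGroup E] [NormedSpace 𝕜 E]
  [NormedAddCommGroup F] [NormedSpace 𝕜 F]

theorem smul_fderiv_smul_eq_of_eventuallyEq {f g : E → F} {t : 𝕜} {ξ : E}
    (h : (f <| t • ·) =ᶠ[𝓝 ξ] g) : t • fderiv 𝕜 f (t • ξ) = fderiv 𝕜 g ξ := by
  rw [← fderiv_comp_smul, h.fderiv_eq]

theorem fderiv_apply_self_eq_deriv {f : E → F} {ξ : E} (hf : DifferentiableAt 𝕜 f ξ) :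
    fderiv 𝕜 f ξ ξ = deriv (fun u : 𝕜 => f (u • ξ)) 1 := by
  have hray : HasDerivAt (fun u : 𝕜 => u • ξ) ξ 1 := by
    simpa using (hasDerivAt_id (1 : 𝕜)).smul_const ξ
  have hf' : HasFDerivAt f (fderiv 𝕜 f ξ) ((1 : 𝕜) • ξ) := by rw [one_smul]; exact hf.hasFDerivAt
  exact (hf'.comp_hasDerivAt 1 hray).deriv.symm

end Calculus

section Homogeneous

variable {E F : Type*} [NormedAddCommGroup E] [NormedSpace ℝ E] [NormedAddCommGroup F]
  [NormedSpace ℝ F]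

def IsPosHomogeneous (d : ℤ) (g : E → F) : Prop :=
  ∀ t : ℝ, 0 < t → ∀ x : E, x ≠ 0 → g (t • x) = t ^ d • g x

variable {d : ℤ} {g : E → F}

theorem IsPosHomogeneous.norm (hg : IsPosHomogeneous d g) :
    IsPosHomogeneous d (fun x => ‖g x‖) := by
  intro t ht x hx
  show ‖g (t • x)‖ = t ^ d • ‖g x‖
  rw [hg t ht x hx, norm_smul, Real.norm_of_nonneg (zpow_nonneg ht.le d), smul_eq_mul]

theorem IsPosHomogeneous.fderiv_apply_self (hg : IsPosHomogeneous d g) {x : E} (hx : x ≠ 0)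
    (hgx : DifferentiableAt ℝ g x) : fderiv ℝ g x x = (d : ℝ) • g x := by
  have hnear : (fun u : ℝ => g (u • x)) =ᶠ[𝓝 1] fun u => u ^ d • g x := by
    filter_upwards [eventually_gt_nhds one_pos] with u hu using hg u hu x hx
  have hpow := (hasDerivAt_zpow d (1 : ℝ) (Or.inl one_ne_zero)).smul_const (g x)
  rw [fderiv_apply_self_eq_deriv hgx, hnear.deriv_eq, hpow.deriv, one_zpow, mul_one]

theorem IsPosHomogeneous.fderiv (hg : IsPosHomogeneous d g) :
    IsPosHomogeneous (d - 1) (fderiv ℝ g) := by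
  intro t ht x hx
  have hnear : (g <| t • ·) =ᶠ[𝓝 x] t ^ d • g := by
    filter_upwards [isOpen_compl_singleton.mem_nhds hx] with y hy using hg t ht y hy
  have h := smul_fderiv_smul_eq_of_eventuallyEq hnear
  rw [fderiv_const_smul_field, Pi.smul_apply] at h
  rw [zpow_sub_one₀ ht.ne', mul_comm, mul_smul, ← h, inv_smul_smul₀ ht.ne']

section RealValued

variable {g : E → ℝ}

theorem IsPosHomogeneous.mul {e : ℤ} {f : E → ℝ} (hf : IsPosHomogeneous d f)
    (hg : IsPosHomogeneous e g) : IsPosHomogeneous (d + e) (fun x => f x * g x) := by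
  intro t ht x hx
  simp only [hf t ht x hx, hg t ht x hx, smul_eq_mul, zpow_add₀ ht.ne']
  ring

theorem IsPosHomogeneous.eq_norm_zpow_mul (hg : IsPosHomogeneous d g) {x : E}
    (hx : x ≠ 0) : g x = ‖x‖ ^ d * g (‖x‖⁻¹ • x) := by
  have hr : 0 < ‖x‖ := norm_pos_iff.mpr hx
  rw [← smul_eq_mul, ← hg _ hr _ (smul_ne_zero (inv_ne_zero hr.ne') hx), smul_inv_smul₀ hr.ne']

variable [ProperSpace E]

theorem IsPosHomogeneous.exists_le_mul_norm_zpow (hg : IsPosHomogeneous d g)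
    (hcont : ContinuousOn g {0}ᶜ) : ∃ C > 0, ∀ x ≠ 0, g x ≤ C * ‖x‖ ^ d := by
  have hsub : Metric.sphere (0 : E) 1 ⊆ {0}ᶜ := fun y hy => ne_zero_of_norm_ne_zero (by simp_all)
  obtain ⟨C, hC⟩ := (isCompact_sphere (0 : E) 1).exists_bound_of_continuousOn (hcont.mono hsub)
  refine ⟨max C 1, by positivity, fun x hx => ?_⟩
  have hr : 0 < ‖x‖ := norm_pos_iff.mpr hx
  have hunit : ‖x‖⁻¹ • x ∈ Metric.sphere (0 : E) 1 := by simp [norm_smul, hr.ne']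
  rw [hg.eq_norm_zpow_mul hx, mul_comm]
  gcongr
  exact (le_abs_self _).trans ((hC _ hunit).trans (le_max_left _ _))

theorem IsPosHomogeneous.exists_mul_norm_zpow_le (hg : IsPosHomogeneous d g)
    (hcont : ContinuousOn g {0}ᶜ) (hpos : ∀ x ≠ 0, 0 < g x) :
    ∃ c > 0, ∀ x ≠ 0, c * ‖x‖ ^ d ≤ g x := by
  have hsub : Metric.sphere (0 : E) 1 ⊆ {0}ᶜ := fun y hy => ne_zero_of_norm_ne_zero (by simp_all)
  obtain ⟨c, hc, hcg⟩ := (isCompact_sphere (0 : E) 1).exists_forall_le'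
    (hcont.mono hsub) fun y hy => hpos y (hsub hy)
  refine ⟨c, hc, fun x hx => ?_⟩
  have hr : 0 < ‖x‖ := norm_pos_iff.mpr hx
  have hunit : ‖x‖⁻¹ • x ∈ Metric.sphere (0 : E) 1 := by simp [norm_smul, hr.ne']
  rw [hg.eq_norm_zpow_mul hx, mul_comm]
  gcongr
  exact hcg _ hunit

end RealValued

end Homogeneous

theorem rpow_le_max_mul_rpow {a b c C : ℝ} (e : ℝ) (ha : 0 < a) (hc : 0 < c) (hca : c * a ≤ b)
    (hbC : b ≤ C * a) : b ^ e ≤ max (c ^ e) (C ^ e) * a ^ e := by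
  have hb : 0 < b := (mul_pos hc ha).trans_le hca
  rcases le_total 0 e with he | he
  · calc b ^ e ≤ (C * a) ^ e := Real.rpow_le_rpow hb.le hbC he
      _ = C ^ e * a ^ e := Real.mul_rpow (by nlinarith) ha.le
      _ ≤ _ := by gcongr; exact le_max_right _ _
  · calc b ^ e ≤ (c * a) ^ e := Real.rpow_le_rpow_of_nonpos (by positivity) hca he
      _ = c ^ e * a ^ e := Real.mul_rpow hc.le ha.le
      _ ≤ _ := by gcongr; exact le_max_left _ _

theorem min_mul_rpow_le_rpow {a b c C : ℝ} (e : ℝ) (ha : 0 < a) (hc : 0 < c) (hca : c * a ≤ b)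
    (hbC : b ≤ C * a) : min (c ^ e) (C ^ e) * a ^ e ≤ b ^ e := by
  have hb : 0 < b := (mul_pos hc ha).trans_le hca
  rcases le_total 0 e with he | he
  · calc min (c ^ e) (C ^ e) * a ^ e ≤ c ^ e * a ^ e := by gcongr; exact min_le_left _ _
      _ = (c * a) ^ e := (Real.mul_rpow hc.le ha.le).symm
      _ ≤ b ^ e := Real.rpow_le_rpow (by positivity) hca he
  · calc min (c ^ e) (C ^ e) * a ^ e ≤ C ^ e * a ^ e := by gcongr; exact min_le_right _ _
      _ = (C * a) ^ e := (Real.mul_rpow (by nlinarith) ha.le).symm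
      _ ≤ b ^ e := Real.rpow_le_rpow_of_nonpos hb hbC he

theorem exists_rpow_add_comparable {α : Type*} {s : Set α} {f g : α → ℝ} {k m M : ℝ} (e : ℝ)
    (hk : 0 ≤ k) (hm : 0 < m) (hg : ∀ x ∈ s, 0 < g x) (hlow : ∀ x ∈ s, m * g x ≤ f x)
    (hup : ∀ x ∈ s, f x ≤ M * g x) :
    ∃ κ₁ > 0, ∃ κ₂ > 0, ∀ x ∈ s,
      κ₁ * (k + g x) ^ e ≤ (k + f x) ^ e ∧ (k + f x) ^ e ≤ κ₂ * (k + g x) ^ e := by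
  have hc : 0 < min m 1 := lt_min hm one_pos
  have hC : 0 < max M 1 := lt_max_of_lt_right one_pos
  refine ⟨min (min m 1 ^ e) (max M 1 ^ e),
    lt_min (Real.rpow_pos_of_pos hc e) (Real.rpow_pos_of_pos hC e),
    max (min m 1 ^ e) (max M 1 ^ e), lt_max_of_lt_left (Real.rpow_pos_of_pos hc e),
    fun x hx => ?_⟩
  have hgx := hg x hx
  have hca : min m 1 * (k + g x) ≤ k + f x := by
    nlinarith [min_le_left m 1, min_le_right m 1, hlow x hx]
  have hbC : k + f x ≤ max M 1 * (k + g x) := by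
    nlinarith [le_max_left M 1, le_max_right M 1, hup x hx]
  exact ⟨min_mul_rpow_le_rpow e (by positivity) hc hca hbC,
    rpow_le_max_mul_rpow e (by positivity) hc hca hbC⟩

section Bilinear

variable {E : Type*} [NormedAddCommGroup E] [InnerProductSpace ℝ E]

theorem abs_mul_inner_mul_inner_add_mul_inner_le (β₁ β₂ : ℝ) (g : E) (A : E →L[ℝ] E) (v w : E) :
    |β₁ * (⟪g, v⟫_ℝ * ⟪g, w⟫_ℝ) + β₂ * ⟪A v, w⟫_ℝ| ≤
      (|β₁| * ‖g‖ ^ 2 + |β₂| * ‖A‖) * ‖v‖ * ‖w‖ := by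
  have hgv := abs_real_inner_le_norm g v
  have hgw := abs_real_inner_le_norm g w
  have hAvw : |⟪A v, w⟫_ℝ| ≤ ‖A‖ * ‖v‖ * ‖w‖ :=
    (abs_real_inner_le_norm _ _).trans
      (mul_le_mul_of_nonneg_right (A.le_opNorm v) (norm_nonneg w))
  calc _ ≤ |β₁| * (|⟪g, v⟫_ℝ| * |⟪g, w⟫_ℝ|) + |β₂| * |⟪A v, w⟫_ℝ| := by
        rw [← abs_mul, ← abs_mul, ← abs_mul]; exact abs_add_le _ _
    _ ≤ |β₁| * ((‖g‖ * ‖v‖) * (‖g‖ * ‖w‖)) + |β₂| * (‖A‖ * ‖v‖ * ‖w‖) := by gcongr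
    _ = _ := by ring

theorem abs_mul_inner_mul_inner_add_mul_inner_le_of_le {β₁ β₂ b r c₁ c₂ : ℝ} {g : E}
    {A : E →L[ℝ] E} (hβ₁ : |β₁| ≤ b) (hβ₂ : |β₂| ≤ b * r) (hg : ‖g‖ ≤ c₁) (hA : ‖A‖ * r ≤ c₂)
    (v w : E) :
    |β₁ * (⟪g, v⟫_ℝ * ⟪g, w⟫_ℝ) + β₂ * ⟪A v, w⟫_ℝ| ≤ b * (c₁ ^ 2 + c₂) * ‖v‖ * ‖w‖ := by
  have hb : 0 ≤ b := (abs_nonneg _).trans hβ₁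
  refine (abs_mul_inner_mul_inner_add_mul_inner_le β₁ β₂ g A v w).trans ?_
  gcongr
  calc |β₁| * ‖g‖ ^ 2 + |β₂| * ‖A‖ ≤ b * c₁ ^ 2 + b * r * ‖A‖ := by gcongr
    _ = b * c₁ ^ 2 + b * (‖A‖ * r) := by ring
    _ ≤ b * (c₁ ^ 2 + c₂) := by rw [mul_add]; gcongr

theorem min_one_sq_mul_sq_norm_add_smul_le {u ξ : E} {a h m : ℝ} (hm : 0 < m)
    (hmξ : m * ‖ξ‖ ≤ h) : min 1 m ^ 2 * ‖u + (a / h) • ξ‖ ^ 2 ≤ 2 * (‖u‖ ^ 2 + a ^ 2) := by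
  have hc : 0 < min 1 m := lt_min one_pos hm
  have hξ : min 1 m * (|a / h| * ‖ξ‖) ≤ |a| := by
    rcases (mul_nonneg hm.le (norm_nonneg ξ)).trans hmξ |>.eq_or_lt with rfl | hh
    · simp
    have hcξ : min 1 m * ‖ξ‖ ≤ h :=
      (mul_le_mul_of_nonneg_right (min_le_right 1 m) (norm_nonneg ξ)).trans hmξ
    rw [abs_div, abs_of_pos hh, div_mul_eq_mul_div, mul_div_assoc', div_le_iff₀ hh]
    nlinarith [mul_le_mul_of_nonneg_left hcξ (abs_nonneg a)]
  have hsum : min 1 m * ‖u + (a / h) • ξ‖ ≤ ‖u‖ + |a| := by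
    calc min 1 m * ‖u + (a / h) • ξ‖ ≤ min 1 m * (‖u‖ + |a / h| * ‖ξ‖) := by
          gcongr; exact (norm_add_le _ _).trans_eq (by rw [norm_smul, Real.norm_eq_abs])
      _ ≤ ‖u‖ + |a| := by nlinarith [min_le_left 1 m, norm_nonneg u]
  nlinarith [sq_abs a, sq_nonneg (‖u‖ - |a|), mul_nonneg hc.le (norm_nonneg (u + (a / h) • ξ))]

/-- Write `v = u + (⟪g, v⟫ / h) • ξ` with `u ⊥ g`: since `A ξ = 0` and `A` is symmetric, only
`⟪A u, u⟫` survives in `⟪A v, v⟫`, and `m ‖ξ‖ ≤ h` controls the `ξ`-component of `v`. -/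
theorem mul_sq_norm_le_of_transversal {g ξ : E} {A : E →L[ℝ] E} {h m lam β β₁ β₂ : ℝ}
    (hA : (A : E →ₗ[ℝ] E).IsSymmetric) (hAξ : A ξ = 0) (hgξ : ⟪g, ξ⟫_ℝ = h) (hh : 0 < h)
    (hm : 0 < m) (hmξ : m * ‖ξ‖ ≤ h) (hlam : 0 ≤ lam)
    (hell : ∀ u, ⟪g, u⟫_ℝ = 0 → lam * ‖u‖ ^ 2 ≤ h * ⟪A u, u⟫_ℝ)
    (hβ : 0 ≤ β) (hβ₁ : β ≤ β₁) (hβ₂ : β * h ≤ β₂) (v : E) :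
    β * (min 1 lam * min 1 m ^ 2 / 2) * ‖v‖ ^ 2 ≤
      β₁ * (⟪g, v⟫_ℝ * ⟪g, v⟫_ℝ) + β₂ * ⟪A v, v⟫_ℝ := by
  set a := ⟪g, v⟫_ℝ
  set u := v - (a / h) • ξ
  have hv : v = u + (a / h) • ξ := (sub_add_cancel v _).symm
  have hgu : ⟪g, u⟫_ℝ = 0 := by
    rw [inner_sub_right, real_inner_smul_right, hgξ, div_mul_cancel₀ a hh.ne', sub_self]
  have hAv : ⟪A v, v⟫_ℝ = ⟪A u, u⟫_ℝ := by
    have hAuξ : ⟪A u, ξ⟫_ℝ = 0 := by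
      rw [← ContinuousLinearMap.coe_coe, hA, ContinuousLinearMap.coe_coe, hAξ, inner_zero_right]
    rw [hv, map_add, map_smul, hAξ, smul_zero, add_zero, inner_add_right, real_inner_smul_right,
      hAuξ, mul_zero, add_zero]
  have hAu : lam * ‖u‖ ^ 2 ≤ h * ⟪A u, u⟫_ℝ := hell u hgu
  have hAu_nonneg : 0 ≤ ⟪A u, u⟫_ℝ :=
    nonneg_of_mul_nonneg_right ((by positivity : 0 ≤ lam * ‖u‖ ^ 2).trans hAu) hh
  have hnorm := min_one_sq_mul_sq_norm_add_smul_le (u := u) (a := a) hm hmξ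
  rw [← hv] at hnorm
  rw [hAv]
  have hlam₁ : min 1 lam ≤ 1 := min_le_left 1 lam
  have hlam₂ : min 1 lam ≤ lam := min_le_right 1 lam
  calc β * (min 1 lam * min 1 m ^ 2 / 2) * ‖v‖ ^ 2
      = β * (min 1 lam / 2 * (min 1 m ^ 2 * ‖v‖ ^ 2)) := by ring
    _ ≤ β * (min 1 lam / 2 * (2 * (‖u‖ ^ 2 + a ^ 2))) := by gcongr
    _ = β * (min 1 lam * (a * a) + min 1 lam * ‖u‖ ^ 2) := by ring
    _ ≤ β * (a * a + lam * ‖u‖ ^ 2) := by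
      refine mul_le_mul_of_nonneg_left ?_ hβ
      exact add_le_add (mul_le_of_le_one_left (mul_self_nonneg a) hlam₁)
        (mul_le_mul_of_nonneg_right hlam₂ (sq_nonneg _))
    _ ≤ β * (a * a + h * ⟪A u, u⟫_ℝ) := by gcongr
    _ = β * (a * a) + β * h * ⟪A u, u⟫_ℝ := by ring
    _ ≤ β₁ * (a * a) + β₂ * ⟪A u, u⟫_ℝ := by
      gcongr
      exact mul_self_nonneg a

end Bilinear

section Gradient

variable {E : Type*} [NormedAddCommGroup E] [InnerProductSpace ℝ E] [CompleteSpace E]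
  {H : E → ℝ} {ξ : E}

theorem ContDiffOn.gradient {s : Set E} {n : WithTop ℕ∞}
    (hH : ContDiffOn ℝ (n + 1) H s) (hs : IsOpen s) : ContDiffOn ℝ n (gradient H) s :=
  (toDual ℝ E).symm.contDiff.comp_contDiffOn (hH.fderiv_of_isOpen hs le_rfl)

theorem inner_fderiv_gradient (v w : E) :
    ⟪fderiv ℝ (gradient H) ξ v, w⟫_ℝ = fderiv ℝ (fderiv ℝ H) ξ v w := by
  rw [show gradient H = (toDual ℝ E).symm ∘ fderiv ℝ H from rfl, LinearIsometryEquiv.comp_fderiv]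
  exact toDual_symm_apply

theorem ContDiffAt.isSymmetric_fderiv_gradient (hH : ContDiffAt ℝ 2 H ξ) :
    (fderiv ℝ (gradient H) ξ : E →ₗ[ℝ] E).IsSymmetric := by
  intro v w
  change ⟪fderiv ℝ (gradient H) ξ v, w⟫_ℝ = ⟪v, fderiv ℝ (gradient H) ξ w⟫_ℝ
  rw [real_inner_comm _ v, inner_fderiv_gradient, inner_fderiv_gradient,
    hH.isSymmSndFDerivAt (by simp)]

theorem IsPosHomogeneous.gradient {d : ℤ} (hH : IsPosHomogeneous d H) :
    IsPosHomogeneous (d - 1) (gradient H) := by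
  intro t ht x hx
  simp only [_root_.gradient, hH.fderiv t ht x hx, map_smul]

theorem inner_gradient_self_of_isPosHomogeneous (hH : IsPosHomogeneous 1 H) (hξ : ξ ≠ 0)
    (hHξ : DifferentiableAt ℝ H ξ) : ⟪gradient H ξ, ξ⟫_ℝ = H ξ := by
  rw [inner_gradient_left, hH.fderiv_apply_self hξ hHξ, Int.cast_one, one_smul]

theorem fderiv_gradient_apply_self_of_isPosHomogeneous (hH : IsPosHomogeneous 1 H) (hξ : ξ ≠ 0)
    (hHξ : DifferentiableAt ℝ (gradient H) ξ) : fderiv ℝ (gradient H) ξ ξ = 0 := by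
  simpa using hH.gradient.fderiv_apply_self hξ hHξ

theorem mul_sq_norm_le_inner_fderiv_gradient_of_isPosHomogeneous (hH : IsPosHomogeneous 1 H)
    {lam : ℝ} (hell : ∀ ξ, H ξ = 1 → ∀ v, ⟪gradient H ξ, v⟫_ℝ = 0 →
      lam * ‖v‖ ^ 2 ≤ ⟪fderiv ℝ (gradient H) ξ v, v⟫_ℝ)
    (hξ : ξ ≠ 0) (hHξ : 0 < H ξ) (u : E) (hu : ⟪gradient H ξ, u⟫_ℝ = 0) :
    lam * ‖u‖ ^ 2 ≤ H ξ * ⟪fderiv ℝ (gradient H) ξ u, u⟫_ℝ := by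
  have ht : 0 < (H ξ)⁻¹ := inv_pos.2 hHξ
  have hlevel : H ((H ξ)⁻¹ • ξ) = 1 := by
    rw [hH _ ht _ hξ, zpow_one, smul_eq_mul, inv_mul_cancel₀ hHξ.ne']
  have hgrad : gradient H ((H ξ)⁻¹ • ξ) = gradient H ξ := by
    rw [hH.gradient _ ht _ hξ, sub_self, zpow_zero, one_smul]
  have hhess : fderiv ℝ (gradient H) ((H ξ)⁻¹ • ξ) = H ξ • fderiv ℝ (gradient H) ξ := by
    rw [hH.gradient.fderiv _ ht _ hξ]; norm_num
  have h := hell _ hlevel u (hgrad ▸ hu)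
  rwa [hhess, smul_apply, real_inner_smul_left] at h

theorem mul_sq_norm_le_inner_gradient_sq_add_inner_hessian (hH : ContDiffOn ℝ 2 H {0}ᶜ)
    (hhom : IsPosHomogeneous 1 H) {lam m β β₁ β₂ : ℝ}
    (hell : ∀ ξ, H ξ = 1 → ∀ v, ⟪gradient H ξ, v⟫_ℝ = 0 →
      lam * ‖v‖ ^ 2 ≤ ⟪fderiv ℝ (gradient H) ξ v, v⟫_ℝ)
    (hξ : ξ ≠ 0) (hHξ : 0 < H ξ) (hm : 0 < m) (hmξ : m * ‖ξ‖ ≤ H ξ) (hlam : 0 ≤ lam)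
    (hβ : 0 ≤ β) (hβ₁ : β ≤ β₁) (hβ₂ : β * H ξ ≤ β₂) (v : E) :
    β * (min 1 lam * min 1 m ^ 2 / 2) * ‖v‖ ^ 2 ≤
      β₁ * (⟪gradient H ξ, v⟫_ℝ * ⟪gradient H ξ, v⟫_ℝ) +
        β₂ * ⟪fderiv ℝ (gradient H) ξ v, v⟫_ℝ := by
  have hnhds : {0}ᶜ ∈ 𝓝 ξ := isOpen_compl_singleton.mem_nhds hξ
  have hC2 : ContDiffAt ℝ 2 H ξ := hH.contDiffAt hnhds
  have hgrad : DifferentiableAt ℝ (gradient H) ξ :=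
    ((hH.gradient isOpen_compl_singleton).contDiffAt hnhds).differentiableAt one_ne_zero
  exact mul_sq_norm_le_of_transversal hC2.isSymmetric_fderiv_gradient
    (fderiv_gradient_apply_self_of_isPosHomogeneous hhom hξ hgrad)
    (inner_gradient_self_of_isPosHomogeneous hhom hξ (hC2.differentiableAt two_ne_zero))
    hHξ hm hmξ hlam (mul_sq_norm_le_inner_fderiv_gradient_of_isPosHomogeneous hhom hell hξ hHξ)
    hβ hβ₁ hβ₂ v

end Gradient

theorem structural_ellipticity_bounds_general {n : ℕ}
    (p k gam Gam lam : ℝ) (hk : k ∈ Set.Icc (0:ℝ) 1)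
    (hgam : 0 < gam) (hgamGam : gam ≤ Gam) (hlam : 0 < lam)
    (B : ℝ → ℝ)
    (hB'bound : ∀ t : ℝ, 0 < t →
      gam * (k + t) ^ (p - 2) * t ≤ deriv B t ∧
      deriv B t ≤ Gam * (k + t) ^ (p - 2) * t)
    (hB''bound : ∀ t : ℝ, 0 < t →
      gam * (k + t) ^ (p - 2) ≤ deriv (deriv B) t ∧
      deriv (deriv B) t ≤ Gam * (k + t) ^ (p - 2))
    (H : EuclideanSpace ℝ (Fin n) → ℝ)
    (hH2 : ContDiffOn ℝ 2 H {(0 : EuclideanSpace ℝ (Fin n))}ᶜ)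
    (hHpos : ∀ ξ : EuclideanSpace ℝ (Fin n), ξ ≠ 0 → 0 < H ξ)
    (hHhomog : ∀ t : ℝ, 0 < t → ∀ ξ : EuclideanSpace ℝ (Fin n), ξ ≠ 0 →
      H (t • ξ) = t * H ξ)
    (hHell : ∀ ξ : EuclideanSpace ℝ (Fin n), H ξ = 1 →
      ∀ v : EuclideanSpace ℝ (Fin n), (inner ℝ (gradient H ξ) v : ℝ) = 0 →
        lam * ‖v‖ ^ 2 ≤ (inner ℝ (fderiv ℝ (gradient H) ξ v) v : ℝ))
    (M : EuclideanSpace ℝ (Fin n) → EuclideanSpace ℝ (Fin n) →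
      EuclideanSpace ℝ (Fin n) → ℝ)
    (hM : ∀ ξ v w : EuclideanSpace ℝ (Fin n), M ξ v w =
      deriv (deriv B) (H ξ) *
        ((inner ℝ (gradient H ξ) v : ℝ) * (inner ℝ (gradient H ξ) w : ℝ)) +
      deriv B (H ξ) * (inner ℝ (fderiv ℝ (gradient H) ξ v) w : ℝ)) :
    ∃ C₁ C₂ : ℝ, 0 < C₁ ∧ 0 < C₂ ∧
      ∀ ξ : EuclideanSpace ℝ (Fin n), ξ ≠ 0 →
        (∀ v : EuclideanSpace ℝ (Fin n),
          C₁ * (k + ‖ξ‖) ^ (p - 2) * ‖v‖ ^ 2 ≤ M ξ v v) ∧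
        (∀ v w : EuclideanSpace ℝ (Fin n),
          |M ξ v w| ≤ C₂ * (k + ‖ξ‖) ^ (p - 2) * ‖v‖ * ‖w‖) := by
  have hhom : IsPosHomogeneous 1 H := fun t ht ξ hξ => by
    rw [zpow_one, smul_eq_mul]; exact hHhomog t ht ξ hξ
  have hgrad : ContDiffOn ℝ 1 (gradient H) {0}ᶜ := hH2.gradient isOpen_compl_singleton
  obtain ⟨m₁, hm₁, hHlow⟩ := hhom.exists_mul_norm_zpow_le hH2.continuousOn hHpos
  obtain ⟨m₂, hm₂, hHup⟩ := hhom.exists_le_mul_norm_zpow hH2.continuousOn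
  obtain ⟨cg, hcg, hg⟩ := hhom.gradient.norm.exists_le_mul_norm_zpow hgrad.continuousOn.norm
  obtain ⟨cA, hcA, hA⟩ := (hhom.gradient.fderiv.norm.mul hhom).exists_le_mul_norm_zpow
    ((hgrad.continuousOn_fderiv_of_isOpen isOpen_compl_singleton le_rfl).norm.mul
      hH2.continuousOn)
  norm_num at hHlow hHup hg hA
  obtain ⟨κ₁, hκ₁, κ₂, hκ₂, hcomp⟩ := exists_rpow_add_comparable (s := {0}ᶜ) (p - 2) hk.1 hm₁
    (fun ξ hξ => norm_pos_iff.2 hξ) hHlow hHup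
  have hG : 0 < Gam := hgam.trans_le hgamGam
  refine ⟨gam * κ₁ * (min 1 lam * min 1 m₁ ^ 2 / 2), Gam * κ₂ * (cg ^ 2 + cA),
    by positivity, by positivity, fun ξ hξ => ?_⟩
  have hHξ := hHpos ξ hξ
  obtain ⟨hB'₁, hB'₂⟩ := hB'bound _ hHξ
  obtain ⟨hB''₁, hB''₂⟩ := hB''bound _ hHξ
  obtain ⟨hcomp₁, hcomp₂⟩ := hcomp ξ hξ
  have hβ : 0 < gam * (k + H ξ) ^ (p - 2) :=
    mul_pos hgam (Real.rpow_pos_of_pos (by linarith [hk.1]) _)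
  refine ⟨fun v => ?_, fun v w => ?_⟩ <;> rw [hM]
  · calc gam * κ₁ * (min 1 lam * min 1 m₁ ^ 2 / 2) * (k + ‖ξ‖) ^ (p - 2) * ‖v‖ ^ 2
        = gam * (κ₁ * (k + ‖ξ‖) ^ (p - 2)) * (min 1 lam * min 1 m₁ ^ 2 / 2) * ‖v‖ ^ 2 := by ring
      _ ≤ gam * (k + H ξ) ^ (p - 2) * (min 1 lam * min 1 m₁ ^ 2 / 2) * ‖v‖ ^ 2 := by gcongr
      _ ≤ _ := mul_sq_norm_le_inner_gradient_sq_add_inner_hessian hH2 hhom hHell hξ hHξ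
        hm₁ (hHlow ξ hξ) hlam.le hβ.le hB''₁ hB'₁ v
  · calc _ ≤ Gam * (k + H ξ) ^ (p - 2) * (cg ^ 2 + cA) * ‖v‖ * ‖w‖ :=
          abs_mul_inner_mul_inner_add_mul_inner_le_of_le
            (abs_le.2 ⟨by linarith, hB''₂⟩) (abs_le.2 ⟨by nlinarith, hB'₂⟩)
            (hg ξ hξ) (hA ξ hξ) v w
      _ ≤ Gam * (κ₂ * (k + ‖ξ‖) ^ (p - 2)) * (cg ^ 2 + cA) * ‖v‖ * ‖w‖ := by gcongr
      _ = _ := by ring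

/-- Structural ellipticity bounds: under the assumptions (i)–(vi) there exist
`C̄₁, C̄₂ > 0` such that the matrix
`M(ξ) = B''(H(ξ)) ∇H(ξ) ⊗ ∇H(ξ) + B'(H(ξ)) D²H(ξ)` satisfies
`⟨M(ξ) v, v⟩ ≥ C̄₁ (k+|ξ|)^{p-2} |v|²` and
`|⟨M(ξ) v, w⟩| ≤ C̄₂ (k+|ξ|)^{p-2} |v| |w|` for all `ξ ≠ 0` and `v, w`. -/
theorem structural_ellipticity_bounds {n : ℕ}
    (p k gam Gam lam : ℝ) (hp : 1 < p) (hk : k ∈ Set.Icc (0:ℝ) 1)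
    (hgam : 0 < gam) (hgamGam : gam ≤ Gam) (hlam : 0 < lam)
    (B : ℝ → ℝ)
    (hB : ContDiffOn ℝ 2 B (Set.Ioi (0:ℝ)))
    (hB'bound : ∀ t : ℝ, 0 < t →
      gam * (k + t) ^ (p - 2) * t ≤ deriv B t ∧
      deriv B t ≤ Gam * (k + t) ^ (p - 2) * t)
    (hB''bound : ∀ t : ℝ, 0 < t →
      gam * (k + t) ^ (p - 2) ≤ deriv (deriv B) t ∧
      deriv (deriv B) t ≤ Gam * (k + t) ^ (p - 2))
    (H : EuclideanSpace ℝ (Fin n) → ℝ)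
    (hH2 : ContDiffOn ℝ 2 H {(0 : EuclideanSpace ℝ (Fin n))}ᶜ)
    (hHeven : ∀ ξ, H (-ξ) = H ξ)
    (hHpos : ∀ ξ : EuclideanSpace ℝ (Fin n), ξ ≠ 0 → 0 < H ξ)
    (hHhomog : ∀ t : ℝ, 0 < t → ∀ ξ : EuclideanSpace ℝ (Fin n), ξ ≠ 0 →
      H (t • ξ) = t * H ξ)
    (hHell : ∀ ξ : EuclideanSpace ℝ (Fin n), H ξ = 1 →
      ∀ v : EuclideanSpace ℝ (Fin n), (inner ℝ (gradient H ξ) v : ℝ) = 0 →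
        lam * ‖v‖ ^ 2 ≤ (inner ℝ (fderiv ℝ (gradient H) ξ v) v : ℝ))
    (M : EuclideanSpace ℝ (Fin n) → EuclideanSpace ℝ (Fin n) →
      EuclideanSpace ℝ (Fin n) → ℝ)
    (hM : ∀ ξ v w : EuclideanSpace ℝ (Fin n), M ξ v w =
      deriv (deriv B) (H ξ) *
        ((inner ℝ (gradient H ξ) v : ℝ) * (inner ℝ (gradient H ξ) w : ℝ)) +
      deriv B (H ξ) * (inner ℝ (fderiv ℝ (gradient H) ξ v) w : ℝ)) :
    ∃ C₁ C₂ : ℝ, 0 < C₁ ∧ 0 < C₂ ∧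
      ∀ ξ : EuclideanSpace ℝ (Fin n), ξ ≠ 0 →
        (∀ v : EuclideanSpace ℝ (Fin n),
          C₁ * (k + ‖ξ‖) ^ (p - 2) * ‖v‖ ^ 2 ≤ M ξ v v) ∧
        (∀ v w : EuclideanSpace ℝ (Fin n),
          |M ξ v w| ≤ C₂ * (k + ‖ξ‖) ^ (p - 2) * ‖v‖ * ‖w‖) :=
  structural_ellipticity_bounds_general p k gam Gam lam hk hgam hgamGam hlam B hB'bound hB''bound H
    hH2 hHpos hHhomog hHell M hM
end
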